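/- arXiv:2206.10476 — 2 statements merged into one kernel-verified Lean document; each statement's English description precedes it below -/
import Mathlib

section
/- Let K be a finite group, B ≤ K, X a finite left K-set, τ ∈ X, w ∈ K, and suppose BwB·τ = ⊔_{i=1}^N B·τ_i is the decomposition into B-orbits, with τ_i = a_i·τ. Then the convolution of T_w = (#K/#B)·𝟙_{BwB} with the characteristic function ξ_τ of B·τ satisfies T_w ∗ ξ_τ = Σ_{i=1}^N (#(a_i K_τ B ∩ BwB)/#B) · ξ_{τ_i}, where K_τ is the stabilizer of τ in K. -/
open scoped BigOperators Classical

noncomputable def convAct {K X : Type*} [Fintype K] [Group K] [MulAction K X]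
    (f : K → ℂ) (ξ : X → ℂ) : X → ℂ :=
  fun x => (Fintype.card K : ℂ)⁻¹ * ∑ k : K, f k * ξ (k⁻¹ • x)

/-- If `BwB·τ = ⊔_{i=1}^N B·τ_i` with `τ_i = a_i·τ`, then
`T_w ∗ ξ_τ = ∑_i (#(a_i K_τ B ∩ BwB)/#B) · ξ_{τ_i}`, where `ξ_σ` is the characteristic
function of the orbit `B·σ` and `K_τ` is the stabilizer of `τ`. -/
theorem Tw_convolution_formula {K X : Type*} [Fintype K] [Group K] [MulAction K X]
    (B : Subgroup K) (τ : X) (w : K) (N : ℕ) (a : Fin N → K)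
    (hdisj : ∀ i j : Fin N, i ≠ j →
      ∀ x : X, (∃ b ∈ B, b • (a i • τ) = x) → ¬ (∃ b ∈ B, b • (a j • τ) = x))
    (hcover : ∀ x : X,
      (∃ b₁ ∈ B, ∃ b₂ ∈ B, (b₁ * w * b₂) • τ = x) ↔
        ∃ i : Fin N, ∃ b ∈ B, b • (a i • τ) = x) :
    convAct (fun g => if ∃ b₁ ∈ B, ∃ b₂ ∈ B, g = b₁ * w * b₂ then
        (Fintype.card K : ℂ) / (Nat.card B : ℂ) else 0)
      (fun x => if ∃ b ∈ B, b • τ = x then (1 : ℂ) else 0) =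
    fun x => ∑ i : Fin N,
      (Nat.card ({g : K | (∃ k, k • τ = τ ∧ ∃ b ∈ B, g = a i * k * b) ∧
          (∃ b₁ ∈ B, ∃ b₂ ∈ B, g = b₁ * w * b₂)} : Set K) : ℂ) / (Nat.card B : ℂ) *
        (if ∃ b ∈ B, b • (a i • τ) = x then (1 : ℂ) else 0) := by
  classical
  funext x
  set P : K → Prop := fun g => ∃ b₁ ∈ B, ∃ b₂ ∈ B, g = b₁ * w * b₂ with hP
  set S : Set K := {k : K | P k ∧ ∃ b ∈ B, (k * b) • τ = x} with hS
  have hKne : (Fintype.card K : ℂ) ≠ 0 := by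
    exact_mod_cast Fintype.card_ne_zero
  -- LHS equals Nat.card S / Nat.card B
  have hLHS : convAct (fun g => if P g then
        (Fintype.card K : ℂ) / (Nat.card B : ℂ) else 0)
      (fun y => if ∃ b ∈ B, b • τ = y then (1 : ℂ) else 0) x
      = (Nat.card S : ℂ) / (Nat.card B : ℂ) := by
    unfold convAct
    have hsum : ∀ k : K,
        (if P k then (Fintype.card K : ℂ) / (Nat.card B : ℂ) else 0) *
          (if ∃ b ∈ B, b • τ = k⁻¹ • x then (1 : ℂ) else 0)
        = if k ∈ S then (Fintype.card K : ℂ) / (Nat.card B : ℂ) else 0 := by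
      intro k
      have hiff : (∃ b ∈ B, b • τ = k⁻¹ • x) ↔ (∃ b ∈ B, (k * b) • τ = x) := by
        constructor
        · rintro ⟨b, hb, hbe⟩
          exact ⟨b, hb, by rw [mul_smul, hbe, smul_inv_smul]⟩
        · rintro ⟨b, hb, hbe⟩
          exact ⟨b, hb, by rw [← hbe, mul_smul, inv_smul_smul]⟩
      by_cases hp : P k <;> by_cases hq : (∃ b ∈ B, b • τ = k⁻¹ • x) <;>
        simp [hS, hp, hq, hiff.symm, Set.mem_setOf_eq]
    rw [Finset.sum_congr rfl (fun k _ => hsum k)]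
    rw [Finset.sum_ite, Finset.sum_const_zero, add_zero, Finset.sum_const,
      nsmul_eq_mul]
    have hcard : (Finset.univ.filter (· ∈ S)).card = Nat.card S := by
      simp [Nat.card_eq_fintype_card, Fintype.card_subtype]
    rw [hcard]
    field_simp
  rw [hLHS]
  by_cases hx : ∃ i : Fin N, ∃ b ∈ B, b • (a i • τ) = x
  · obtain ⟨i₀, b₀, hb₀, hx₀⟩ := hx
    -- the sum reduces to the i₀ term
    rw [Finset.sum_eq_single_of_mem i₀ (Finset.mem_univ _)]
    · rw [if_pos ⟨b₀, hb₀, hx₀⟩, mul_one]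
      congr 2
      -- Nat.card S = Nat.card T i₀ via g ↦ b₀⁻¹ g
      apply Nat.card_congr
      refine ⟨fun g => ⟨b₀⁻¹ * g.1, ?_⟩, fun g => ⟨b₀ * g.1, ?_⟩, ?_, ?_⟩
      · obtain ⟨⟨b₁, hb₁, b₂, hb₂, hg⟩, b, hb, hbe⟩ := g.2
        constructor
        · refine ⟨(a i₀)⁻¹ * b₀⁻¹ * g.1 * b, ?_, b⁻¹, B.inv_mem hb, by group⟩
          have : ((a i₀)⁻¹ * b₀⁻¹ * g.1 * b) • τ
              = (a i₀)⁻¹ • b₀⁻¹ • (g.1 * b) • τ := by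
            rw [← mul_smul, ← mul_smul]; congr 1; group
          rw [this, hbe, ← hx₀, inv_smul_smul, inv_smul_smul]
        · exact ⟨b₀⁻¹ * b₁, B.mul_mem (B.inv_mem hb₀) hb₁, b₂, hb₂, by
            rw [hg]; group⟩
      · obtain ⟨⟨k, hk, b, hb, hg⟩, b₁, hb₁, b₂, hb₂, hg'⟩ := g.2
        constructor
        · exact ⟨b₀ * b₁, B.mul_mem hb₀ hb₁, b₂, hb₂, by rw [hg']; group⟩
        · refine ⟨b⁻¹, B.inv_mem hb, ?_⟩
          have : (b₀ * g.1 * b⁻¹) • τ = b₀ • (a i₀) • k • τ := by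
            rw [hg, ← mul_smul, ← mul_smul, ← mul_assoc b₀,
              mul_inv_cancel_right, ← mul_assoc]
          rw [this, hk, hx₀]
      · intro g; ext; simp [mul_assoc]
      · intro g; ext; simp [mul_assoc]
    · intro j _ hj
      rw [if_neg (hdisj i₀ j hj.symm x ⟨b₀, hb₀, hx₀⟩), mul_zero]
  · -- x not covered: both sides zero
    have hS0 : S = ∅ := by
      ext k
      simp only [hS, Set.mem_setOf_eq, Set.mem_empty_iff_false, iff_false]
      rintro ⟨⟨b₁, hb₁, b₂, hb₂, hg⟩, b, hb, hbe⟩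
      exact hx ((hcover x).mp ⟨b₁, hb₁, b₂ * b, B.mul_mem hb₂ hb, by
        rw [← hbe, hg]; congr 1; group⟩)
    rw [hS0]
    simp only [Nat.card_eq_fintype_card, Set.empty_def]
    rw [Finset.sum_congr rfl (fun i _ => by
      rw [if_neg (fun h => hx ⟨i, h⟩), mul_zero])]
    simp
end

section
/- For any τ ∈ 𝒢((p,q),r) and any simple transposition s = (i,i+1) acting on the positive vertices, exactly one of the following holds: (I) s·τ = τ; or s·τ ≠ τ, and then exactly one of τ, s·τ has the property that deg(i⁺) < deg((i+1)⁺) or i⁺,(i+1)⁺ are endpoints of two crossing edges, while the other has deg(i⁺) > deg((i+1)⁺) or i⁺,(i+1)⁺ are endpoints of two non-crossing edges. -/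
open Equiv

/-- A graph in `𝒢((p,q),r)`: edges, marked positive vertices, marked negative vertices. -/
def IsGraph (p q r : ℕ)
    (g : Finset (Fin p × Fin q) × Finset (Fin p) × Finset (Fin q)) : Prop :=
  (∀ e ∈ g.1, ∀ e' ∈ g.1, e ≠ e' → e.1 ≠ e'.1 ∧ e.2 ≠ e'.2) ∧
  (∀ i ∈ g.2.1, ∀ e ∈ g.1, e.1 ≠ i) ∧
  (∀ j ∈ g.2.2, ∀ e ∈ g.1, e.2 ≠ j) ∧
  g.1.card + g.2.1.card + g.2.2.card = r

/-- The action of a permutation of the positive vertices on a graph. -/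
def actP {p q : ℕ} (s : Perm (Fin p))
    (g : Finset (Fin p × Fin q) × Finset (Fin p) × Finset (Fin q)) :
    Finset (Fin p × Fin q) × Finset (Fin p) × Finset (Fin q) :=
  (g.1.image fun e => (s e.1, e.2), g.2.1.image s, g.2.2)

/-- The degree of a positive vertex: `2` if marked, `1` if an endpoint of an edge,
`0` otherwise. -/
def degP {p q : ℕ} (g : Finset (Fin p × Fin q) × Finset (Fin p) × Finset (Fin q))
    (v : Fin p) : ℕ :=
  if v ∈ g.2.1 then 2 else if ∃ e ∈ g.1, e.1 = v then 1 else 0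

/-- Property of case (II): `deg(i⁺) < deg((i+1)⁺)`, or `i⁺, (i+1)⁺` are endpoints of two
crossing edges. -/
def caseTwo {p q : ℕ} (g : Finset (Fin p × Fin q) × Finset (Fin p) × Finset (Fin q))
    (i j : Fin p) : Prop :=
  degP g i < degP g j ∨ ∃ b ℓ : Fin q, (i, b) ∈ g.1 ∧ (j, ℓ) ∈ g.1 ∧ ℓ < b

/-- Property of case (III): `deg(i⁺) > deg((i+1)⁺)`, or `i⁺, (i+1)⁺` are endpoints of two
non-crossing edges. -/
def caseThree {p q : ℕ} (g : Finset (Fin p × Fin q) × Finset (Fin p) × Finset (Fin q))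
    (i j : Fin p) : Prop :=
  degP g j < degP g i ∨ ∃ b ℓ : Fin q, (i, b) ∈ g.1 ∧ (j, ℓ) ∈ g.1 ∧ b < ℓ

/-- Trichotomy for the action of a simple transposition `s = (i,i+1)` on positive vertices:
either `s·τ = τ`; or `s·τ ≠ τ` and exactly one of `τ, s·τ` satisfies the case (II) property
while the other satisfies the case (III) property. -/
theorem swap_trichotomy (p q r : ℕ)
    (g : Finset (Fin p × Fin q) × Finset (Fin p) × Finset (Fin q))
    (hg : IsGraph p q r g) (i j : Fin p) (hij : (i : ℕ) + 1 = (j : ℕ)) :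
    actP (Equiv.swap i j) g = g ∨
      (actP (Equiv.swap i j) g ≠ g ∧
        ((caseTwo g i j ∧ ¬ caseTwo (actP (Equiv.swap i j) g) i j ∧
            caseThree (actP (Equiv.swap i j) g) i j ∧ ¬ caseThree g i j) ∨
         (caseTwo (actP (Equiv.swap i j) g) i j ∧ ¬ caseTwo g i j ∧
            caseThree g i j ∧ ¬ caseThree (actP (Equiv.swap i j) g) i j))) := by
  have hne : i ≠ j := by
    intro h; rw [h] at hij; omega
  set s := Equiv.swap i j with hs
  have hsi : s i = j := Equiv.swap_apply_left i j
  have hsj : s j = i := Equiv.swap_apply_right i j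
  have hinv : ∀ v, s (s v) = v := fun v => Equiv.swap_apply_self i j v
  have hmemE : ∀ v b, ((v, b) ∈ (actP s g).1 ↔ (s v, b) ∈ g.1) := by
    intro v b
    simp only [actP, Finset.mem_image, Prod.ext_iff]
    constructor
    · rintro ⟨⟨a, c⟩, he, h1, h2⟩
      dsimp at h1 h2
      have ha : a = s v := by rw [← h1, hinv]
      subst ha; subst h2; exact he
    · intro h
      exact ⟨(s v, b), h, hinv v, rfl⟩
  have hmemM : ∀ v, (v ∈ (actP s g).2.1 ↔ s v ∈ g.2.1) := by
    intro v
    simp only [actP, Finset.mem_image]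
    constructor
    · rintro ⟨a, ha, h1⟩
      have : a = s v := by rw [← h1, hinv]
      subst this; exact ha
    · intro h; exact ⟨s v, h, hinv v⟩
  have hdeg : ∀ v, degP (actP s g) v = degP g (s v) := by
    intro v
    unfold degP
    have h2 : (∃ e ∈ (actP s g).1, e.1 = v) ↔ (∃ e ∈ g.1, e.1 = s v) := by
      constructor
      · rintro ⟨⟨a, c⟩, he, h1⟩
        dsimp at h1; subst h1
        exact ⟨(s a, c), (hmemE a c).1 he, rfl⟩
      · rintro ⟨⟨a, c⟩, he, h1⟩
        dsimp at h1; subst h1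
        exact ⟨(v, c), (hmemE v c).2 he, rfl⟩
    rw [if_congr (hmemM v) rfl (if_congr h2 rfl rfl)]
  have c2act : caseTwo (actP s g) i j ↔ caseThree g i j := by
    unfold caseTwo caseThree
    rw [hdeg i, hdeg j, hsi, hsj]
    constructor
    · rintro (h | ⟨b, ℓ, hib, hjl, hlt⟩)
      · exact Or.inl h
      · exact Or.inr ⟨ℓ, b, by rwa [← hsj, ← hmemE], by rwa [← hsi, ← hmemE], hlt⟩
    · rintro (h | ⟨b, ℓ, hib, hjl, hlt⟩)
      · exact Or.inl h
      · exact Or.inr ⟨ℓ, b, by rw [hmemE, hsi]; exact hjl, by rw [hmemE, hsj]; exact hib, hlt⟩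
  have c3act : caseThree (actP s g) i j ↔ caseTwo g i j := by
    unfold caseTwo caseThree
    rw [hdeg i, hdeg j, hsi, hsj]
    constructor
    · rintro (h | ⟨b, ℓ, hib, hjl, hlt⟩)
      · exact Or.inl h
      · exact Or.inr ⟨ℓ, b, by rwa [← hsj, ← hmemE], by rwa [← hsi, ← hmemE], hlt⟩
    · rintro (h | ⟨b, ℓ, hib, hjl, hlt⟩)
      · exact Or.inl h
      · exact Or.inr ⟨ℓ, b, by rw [hmemE, hsi]; exact hjl, by rw [hmemE, hsj]; exact hib, hlt⟩
  obtain ⟨hE, hM, -, -⟩ := hg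
  have hedge_deg : ∀ v b, (v, b) ∈ g.1 → degP g v = 1 := by
    intro v b hmem
    unfold degP
    have hv : v ∉ g.2.1 := fun h => hM v h _ hmem rfl
    rw [if_neg hv, if_pos ⟨(v, b), hmem, rfl⟩]
  have huniq : ∀ v b b', (v, b) ∈ g.1 → (v, b') ∈ g.1 → b = b' := by
    intro v b b' h1 h2
    by_contra hbb
    exact (hE (v, b) h1 (v, b') h2 (by simp [hbb])).1 rfl
  by_cases heq : actP s g = g
  · exact Or.inl heq
  right
  refine ⟨heq, ?_⟩
  have key : (caseTwo g i j ∧ ¬ caseThree g i j) ∨ (caseThree g i j ∧ ¬ caseTwo g i j) := by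
    rcases lt_trichotomy (degP g i) (degP g j) with hlt | heqd | hgt
    · left
      refine ⟨Or.inl hlt, ?_⟩
      rintro (h | ⟨b, ℓ, hib, hjl, -⟩)
      · omega
      · have h1 := hedge_deg i b hib
        have h2 := hedge_deg j ℓ hjl
        omega
    · -- equal degrees
      by_cases hex : ∃ b, (i, b) ∈ g.1
      · obtain ⟨b, hib⟩ := hex
        have hdi : degP g i = 1 := hedge_deg i b hib
        have hdj : degP g j = 1 := by omega
        have hexj : ∃ ℓ, (j, ℓ) ∈ g.1 := by
          unfold degP at hdj
          by_cases hjm : j ∈ g.2.1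
          · rw [if_pos hjm] at hdj; omega
          · rw [if_neg hjm] at hdj
            by_cases h2 : ∃ e ∈ g.1, e.1 = j
            · obtain ⟨⟨a, c⟩, he, h3⟩ := h2
              dsimp at h3; subst h3
              exact ⟨c, he⟩
            · rw [if_neg h2] at hdj; omega
        obtain ⟨ℓ, hjl⟩ := hexj
        have hbl : b ≠ ℓ := by
          intro h; subst h
          exact (hE (i, b) hib (j, b) hjl (by simp [hne])).2 rfl
        rcases lt_or_gt_of_ne hbl with h | h
        · right
          refine ⟨Or.inr ⟨b, ℓ, hib, hjl, h⟩, ?_⟩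
          rintro (h' | ⟨b', ℓ', hib', hjl', hlt⟩)
          · omega
          · have hb : b' = b := huniq i b' b hib' hib
            have hl : ℓ' = ℓ := huniq j ℓ' ℓ hjl' hjl
            subst hb; subst hl
            exact absurd h (not_lt.mpr (le_of_lt hlt))
        · left
          refine ⟨Or.inr ⟨b, ℓ, hib, hjl, h⟩, ?_⟩
          rintro (h' | ⟨b', ℓ', hib', hjl', hlt⟩)
          · omega
          · have hb : b' = b := huniq i b' b hib' hib
            have hl : ℓ' = ℓ := huniq j ℓ' ℓ hjl' hjl
            subst hb; subst hl
            exact absurd h (not_lt.mpr (le_of_lt hlt))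
      · -- no edge at i: show actP s g = g, contradiction
        exfalso
        have hnoi : ¬ ∃ e ∈ g.1, e.1 = i := by
          rintro ⟨⟨a, c⟩, he, h3⟩
          dsimp at h3; subst h3
          exact hex ⟨c, he⟩
        have hdi : degP g i = if i ∈ g.2.1 then 2 else 0 := by
          unfold degP
          by_cases him : i ∈ g.2.1
          · rw [if_pos him, if_pos him]
          · rw [if_neg him, if_neg him, if_neg hnoi]
        have hnoj : ¬ ∃ e ∈ g.1, e.1 = j := by
          rintro ⟨⟨a, c⟩, he, h3⟩
          dsimp at h3
          have hdj : degP g j = 1 := by rw [← h3]; exact hedge_deg a c he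
          by_cases him : i ∈ g.2.1 <;> simp [him] at hdi <;> omega
        have hdj : degP g j = if j ∈ g.2.1 then 2 else 0 := by
          unfold degP
          by_cases hjm : j ∈ g.2.1
          · rw [if_pos hjm, if_pos hjm]
          · rw [if_neg hjm, if_neg hjm, if_neg hnoj]
        have hmark : i ∈ g.2.1 ↔ j ∈ g.2.1 := by
          by_cases him : i ∈ g.2.1 <;> by_cases hjm : j ∈ g.2.1 <;>
            simp [him, hjm] at hdi hdj ⊢ <;> omega
        apply heq
        have h1 : g.1.image (fun e => (s e.1, e.2)) = g.1 := by
          have : ∀ e ∈ g.1, (s e.1, e.2) = e := by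
            intro e he
            have h1 : e.1 ≠ i := fun h => hnoi ⟨e, he, h⟩
            have h2 : e.1 ≠ j := fun h => hnoj ⟨e, he, h⟩
            rw [hs, Equiv.swap_apply_of_ne_of_ne h1 h2]
          calc g.1.image (fun e => (s e.1, e.2)) = g.1.image id :=
                Finset.image_congr (fun e he => this e he)
            _ = g.1 := Finset.image_id
        have h2 : g.2.1.image s = g.2.1 := by
          ext v
          rw [show (v ∈ g.2.1.image s) ↔ v ∈ (actP s g).2.1 from Iff.rfl, hmemM v]
          by_cases hvi : v = i
          · subst hvi; rw [hsi]; exact hmark.symm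
          · by_cases hvj : v = j
            · subst hvj; rw [hsj]; exact hmark
            · rw [hs, Equiv.swap_apply_of_ne_of_ne hvi hvj]
        show (g.1.image (fun e => (s e.1, e.2)), g.2.1.image s, g.2.2) = g
        rw [h1, h2]
    · right
      refine ⟨Or.inl hgt, ?_⟩
      rintro (h | ⟨b, ℓ, hib, hjl, -⟩)
      · omega
      · have h1 := hedge_deg i b hib
        have h2 := hedge_deg j ℓ hjl
        omega
  rcases key with ⟨h1, h2⟩ | ⟨h1, h2⟩
  · exact Or.inl ⟨h1, by rw [c2act]; exact h2, by rw [c3act]; exact h1, h2⟩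
  · exact Or.inr ⟨by rw [c2act]; exact h1, h2, h1, by rw [c3act]; exact h2⟩
end
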